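/- arXiv:2005.00297 — 2 statements merged into one kernel-verified Lean document; each statement's English description precedes it below -/
import Mathlib

section
/- Let W be the graph on vertices v_0, v_1, ..., v_5 where v_1 v_2 v_3 v_4 v_5 form a cycle with every cycle edge doubled, and v_0 is joined to each v_i by a single edge. Let β assign value 1 in Z_3 to every vertex. Then for any orientation D of W with d^+_D(v) - d^-_D(v) ≡ 1 (mod 3) for every vertex v, there exists a vertex v_j with outdegree 0 and indegree 5. -/
/-!
Every vertex of `W` has degree 5, so `d⁺(v) - d⁻(v)` is an odd number in `[-5, 5]`; being
`≡ 1 (mod 3)` it is either `1` or `-5`, and `-5` means outdegree `0` and indegree `5`.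
If it were `1` at all six vertices, the net outflow would be `6`, whereas every edge leaves
one vertex and enters another, so the net outflow is `0`.
-/

open Finset

/-- A finite multigraph without loops: each edge `e` has two distinct
endpoints `fst e` and `snd e`.  An orientation is a map `D : E → Bool`,
where `D e = true` means `e` is directed from `fst e` to `snd e`. -/
structure Multigraph (V : Type) (E : Type) where
  fst : E → V
  snd : E → V
  no_loop : ∀ e, fst e ≠ snd e

namespace Multigraph

variable {V E : Type} [Fintype V] [DecidableEq V] [Fintype E] [DecidableEq E]

/-- The tail (initial vertex) of edge `e` under orientation `D`. -/
def tail (G : Multigraph V E) (D : E → Bool) (e : E) : V :=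
  if D e then G.fst e else G.snd e

/-- The head (terminal vertex) of edge `e` under orientation `D`. -/
def head (G : Multigraph V E) (D : E → Bool) (e : E) : V :=
  if D e then G.snd e else G.fst e

/-- Outdegree `d⁺_D(v)` (as an integer, for convenience). -/
def outDeg (G : Multigraph V E) (D : E → Bool) (v : V) : ℤ :=
  ((univ.filter fun e => G.tail D e = v).card : ℤ)

/-- Indegree `d⁻_D(v)`. -/
def inDeg (G : Multigraph V E) (D : E → Bool) (v : V) : ℤ :=
  ((univ.filter fun e => G.head D e = v).card : ℤ)

/-- `e` is incident with `v`. -/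
def Incident (G : Multigraph V E) (v : V) (e : E) : Prop :=
  G.fst e = v ∨ G.snd e = v

instance (G : Multigraph V E) (v : V) : DecidablePred (G.Incident v) := fun e =>
  inferInstanceAs (Decidable (G.fst e = v ∨ G.snd e = v))

/-- The degree of a vertex. -/
def degree (G : Multigraph V E) (v : V) : ℕ :=
  (univ.filter fun e => G.Incident v e).card

/-- The edge-cut `∂_G(A)`: edges with exactly one endpoint in `A`. -/
def cut (G : Multigraph V E) (A : Finset V) : Finset E :=
  univ.filter fun e => ¬ ((G.fst e ∈ A) ↔ (G.snd e ∈ A))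

/-- `G` is `k`-edge-connected: every edge-cut has at least `k` edges. -/
def EdgeConnected (G : Multigraph V E) (k : ℕ) : Prop :=
  ∀ A : Finset V, A.Nonempty → A ≠ univ → k ≤ (G.cut A).card

/-- A boundary function: values in `ℤ₃` summing to `0`. -/
def IsBoundary (β : V → ZMod 3) : Prop := ∑ v, β v = 0

/-- `D` is a `β`-orientation: `d⁺(v) - d⁻(v) ≡ β v (mod 3)` at every vertex. -/
def IsBetaOrientation (G : Multigraph V E) (β : V → ZMod 3) (D : E → Bool) : Prop :=
  ∀ v : V, ((G.outDeg D v - G.inDeg D v : ℤ) : ZMod 3) = β v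

/-- A mod 3-orientation: `d⁺(v) ≡ d⁻(v) (mod 3)` at every vertex. -/
def IsMod3Orientation (G : Multigraph V E) (D : E → Bool) : Prop :=
  ∀ v : V, ((G.outDeg D v - G.inDeg D v : ℤ) : ZMod 3) = 0

/-- `G` admits a mod 3-orientation (equivalently, a nowhere-zero 3-flow). -/
def Mod3Orientable (G : Multigraph V E) : Prop := ∃ D, G.IsMod3Orientation D

/-- `G` is `ℤ₃`-connected. -/
def Z3Connected (G : Multigraph V E) : Prop :=
  ∀ β : V → ZMod 3, IsBoundary β → ∃ D, G.IsBetaOrientation β D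

/-- `G` is `ℤ₃`-extendable at `x`: every pre-orientation of the edges at `x`
compatible with `β x` extends to a `β`-orientation of `G`. -/
def Z3ExtendableAt (G : Multigraph V E) (x : V) : Prop :=
  ∀ β : V → ZMod 3, IsBoundary β →
    ∀ D₀ : E → Bool, ((G.outDeg D₀ x - G.inDeg D₀ x : ℤ) : ZMod 3) = β x →
      ∃ D : E → Bool, (∀ e, G.Incident x e → D e = D₀ e) ∧ G.IsBetaOrientation β D

/-- `G` is mod-3-extendable at `x`: every pre-orientation of `∂(x)` with
`d⁺(x) ≡ d⁻(x) (mod 3)` extends to a mod 3-orientation of `G`. -/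
def Mod3ExtendableAt (G : Multigraph V E) (x : V) : Prop :=
  ∀ D₀ : E → Bool, ((G.outDeg D₀ x - G.inDeg D₀ x : ℤ) : ZMod 3) = 0 →
    ∃ D : E → Bool, (∀ e, G.Incident x e → D e = D₀ e) ∧ G.IsMod3Orientation D

/-- `A` is a `k`-critical-set: `d(A) ≤ k` but every nonempty proper subset has
larger boundary. -/
def CriticalSet (G : Multigraph V E) (k : ℕ) (A : Finset V) : Prop :=
  A.Nonempty ∧ A ≠ univ ∧ (G.cut A).card ≤ k ∧
    ∀ B : Finset V, B.Nonempty → B ⊂ A → k < (G.cut B).card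

/-- The set of edge-cuts of size exactly `k` (as sets of edges). -/
def kCuts (G : Multigraph V E) (k : ℕ) : Finset (Finset E) :=
  ((univ : Finset (Finset V)).filter
    fun A => A.Nonempty ∧ A ≠ univ ∧ (G.cut A).card = k).image G.cut


/-- The graph `W`: a 5-cycle `v₁v₂v₃v₄v₅` with all cycle edges doubled, plus a
hub `v₀` joined to each `vᵢ` by a single edge. -/
def W : Multigraph (Fin 6) (Fin 15) where
  fst := ![1, 1, 2, 2, 3, 3, 4, 4, 5, 5, 0, 0, 0, 0, 0]
  snd := ![2, 2, 3, 3, 4, 4, 5, 5, 1, 1, 1, 2, 3, 4, 5]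
  no_loop := by decide

end Multigraph

namespace Multigraph

variable {V E : Type} [DecidableEq V] [Fintype E]

lemma sum_outDeg [Fintype V] (G : Multigraph V E) (D : E → Bool) :
    ∑ v, G.outDeg D v = Fintype.card E := by
  simp only [outDeg]
  exact_mod_cast (card_eq_sum_card_fiberwise fun e _ => mem_univ (G.tail D e)).symm

lemma sum_inDeg [Fintype V] (G : Multigraph V E) (D : E → Bool) :
    ∑ v, G.inDeg D v = Fintype.card E := by
  simp only [inDeg]
  exact_mod_cast (card_eq_sum_card_fiberwise fun e _ => mem_univ (G.head D e)).symm

lemma sum_outDeg_sub_inDeg [Fintype V] (G : Multigraph V E) (D : E → Bool) :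
    ∑ v, (G.outDeg D v - G.inDeg D v) = 0 := by
  rw [sum_sub_distrib, sum_outDeg, sum_inDeg, sub_self]

lemma outDeg_add_inDeg (G : Multigraph V E) (D : E → Bool) (v : V) :
    G.outDeg D v + G.inDeg D v = G.degree v := by
  classical
  have hdisj : Disjoint (univ.filter fun e => G.tail D e = v)
      (univ.filter fun e => G.head D e = v) :=
    disjoint_filter.2 fun e _ htail hhead => G.no_loop e <| by
      cases h : D e <;>
        simp only [tail, head, h, if_true, if_false, Bool.false_eq_true] at htail hhead <;>
        rw [htail, hhead]
  simp only [outDeg, inDeg, degree]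
  rw [← Nat.cast_add, ← card_union_of_disjoint hdisj, ← filter_or]
  congr 2
  refine filter_congr fun e _ => ?_
  cases h : D e <;> simp [tail, head, Incident, h, or_comm]

lemma outDeg_sub_inDeg_eq_one_or_of_degree_eq_five (G : Multigraph V E) (D : E → Bool) (v : V)
    (hdeg : G.degree v = 5) (hβ : ((G.outDeg D v - G.inDeg D v : ℤ) : ZMod 3) = 1) :
    G.outDeg D v - G.inDeg D v = 1 ∨ (G.outDeg D v = 0 ∧ G.inDeg D v = 5) := by
  have hsum := G.outDeg_add_inDeg D v
  rw [hdeg] at hsum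
  have hout : 0 ≤ G.outDeg D v := Int.natCast_nonneg _
  have hin : 0 ≤ G.inDeg D v := Int.natCast_nonneg _
  have hmod : (G.outDeg D v - G.inDeg D v) % 3 = 1 % 3 :=
    (ZMod.intCast_eq_intCast_iff' _ _ _).1 (by simpa using hβ)
  omega

lemma W_degree : ∀ v, W.degree v = 5 := by
  decide

/-- For the all-ones boundary `β ≡ 1` on `W`, any `β`-orientation has a vertex
of outdegree `0` and indegree `5`. -/
theorem stmt_2 (D : Fin 15 → Bool)
    (hD : W.IsBetaOrientation (fun _ => 1) D) :
    ∃ j : Fin 6, W.outDeg D j = 0 ∧ W.inDeg D j = 5 := by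
  by_contra! hnone
  have hone : ∀ v, W.outDeg D v - W.inDeg D v = 1 := fun v =>
    ((W.outDeg_sub_inDeg_eq_one_or_of_degree_eq_five D v (W_degree v) (hD v)).resolve_right
      fun h => hnone v h.1 h.2)
  have hzero := W.sum_outDeg_sub_inDeg D
  simp [hone] at hzero

end Multigraph
end

section
/- Suppose every 5-edge-connected graph is Z_3-extendable at every vertex of degree 5. Then every 4-edge-connected graph with at most five edge-cuts of size 4 is Z_3-connected. -/
open Finset

/-!
Posimodularity, `d(A \ B) + d(B \ A) ≤ d(A) + d(B)`, makes distinct 4-critical sets disjoint.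
Hence either two of them are complementary and there are no others, or `A ↦ ∂A` injects them
into the 4-cuts; either way there are at most five. Every set `A` with `d(A) = 4` contains a
4-critical set, so adding a vertex `x` joined by five edges to a vertex of each critical set gives
a 5-edge-connected graph with `d(x) = 5`. Orient these five edges away from `x` and extend to a
`β'`-orientation, where `β'` subtracts from `β` what they deliver: deleting `x` leaves a
`β`-orientation of `G`.
-/

namespace Finset

theorem card_filter_univ_sum {α β : Type*} [Fintype α] [Fintype β] (p : α ⊕ β → Prop)
    [DecidablePred p] : #{x | p x} = #{a | p (Sum.inl a)} + #{b | p (Sum.inr b)} := by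
  simp only [card_filter, Fintype.sum_sum_type]

theorem exists_fin_forall_exists_apply_mem {α : Type*} [Nonempty α] {𝓒 : Finset (Finset α)}
    (h𝓒 : ∀ s ∈ 𝓒, s.Nonempty) {n : ℕ} (hn : #𝓒 ≤ n) :
    ∃ w : Fin n → α, ∀ s ∈ 𝓒, ∃ j, w j ∈ s := by
  classical
  induction 𝓒 using Finset.induction_on generalizing n with
  | empty => exact ⟨fun _ => Classical.arbitrary α, by simp⟩
  | insert s 𝓒 hs ih =>
    rw [card_insert_of_notMem hs] at hn
    obtain ⟨m, rfl⟩ : ∃ m, n = m + 1 := Nat.exists_eq_add_one.2 (by omega)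
    obtain ⟨w, hw⟩ := ih (n := m) (fun t ht => h𝓒 t (mem_insert_of_mem ht)) (by omega)
    have hsne := h𝓒 s (mem_insert_self s 𝓒)
    refine ⟨Fin.cons hsne.choose w, fun t ht => ?_⟩
    rcases mem_insert.1 ht with rfl | ht
    · exact ⟨0, hsne.choose_spec⟩
    · obtain ⟨j, hj⟩ := hw t ht
      exact ⟨j.succ, hj⟩

end Finset

namespace Multigraph

open scoped symmDiff

section Cuts

variable {V E : Type} [DecidableEq V] [Fintype E] (G : Multigraph V E)

theorem card_cut_sdiff_add_card_cut_sdiff_le (A B : Finset V) :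
    #(G.cut (A \ B)) + #(G.cut (B \ A)) ≤ #(G.cut A) + #(G.cut B) := by
  simp only [cut, card_filter, ← sum_add_distrib]
  refine sum_le_sum fun e _ => ?_
  by_cases h1 : G.fst e ∈ A <;> by_cases h2 : G.fst e ∈ B <;>
    by_cases h3 : G.snd e ∈ A <;> by_cases h4 : G.snd e ∈ B <;>
    simp [h1, h2, h3, h4]

variable [Fintype V]

theorem cut_compl (A : Finset V) : G.cut Aᶜ = G.cut A := by
  ext e
  simp only [cut, mem_filter, mem_univ, true_and, mem_compl, not_iff_not]

variable {G}

theorem EdgeConnected.eq_or_eq_compl_of_cut_eq {k : ℕ} (hG : G.EdgeConnected k) (hk : 0 < k)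
    {A B : Finset V} (h : G.cut A = G.cut B) : A = B ∨ A = Bᶜ := by
  have hS : G.cut (A ∆ B) = ∅ := by
    ext e
    have he := congrArg (e ∈ ·) h
    simp only [cut, mem_filter, mem_univ, true_and, eq_iff_iff] at he
    simp only [cut, mem_filter, mem_univ, true_and, mem_symmDiff, notMem_empty, iff_false]
    tauto
  by_contra! hAB
  have hne : (A ∆ B).Nonempty := nonempty_iff_ne_empty.2 (symmDiff_eq_bot.not.2 hAB.1)
  have hnu : A ∆ B ≠ univ := fun hu => hAB.2 ((symmDiff_eq_top _ _).1 hu).eq_compl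
  have := hG _ hne hnu
  rw [hS, card_empty] at this
  omega

theorem exists_criticalSet_subset {k : ℕ} {A : Finset V} (hA : A.Nonempty) (hAu : A ≠ univ)
    (hAk : #(G.cut A) ≤ k) : ∃ B ⊆ A, G.CriticalSet k B := by
  induction A using Finset.strongInduction with
  | H A ih =>
    by_cases hmin : ∀ B : Finset V, B.Nonempty → B ⊂ A → k < #(G.cut B)
    · exact ⟨A, subset_rfl, hA, hAu, hAk, hmin⟩
    push Not at hmin
    obtain ⟨B, hB, hBA, hBk⟩ := hmin
    have hBu : B ≠ univ := ssubset_univ_iff.1 (hBA.trans_subset (subset_univ A))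
    obtain ⟨C, hCB, hC⟩ := ih B hBA hB hBu hBk
    exact ⟨C, hCB.trans hBA.subset, hC⟩

theorem CriticalSet.disjoint {k : ℕ} {A B : Finset V} (hA : G.CriticalSet k A)
    (hB : G.CriticalSet k B) (hAB : A ≠ B) : Disjoint A B := by
  obtain ⟨hAne, -, hAk, hAmin⟩ := hA
  obtain ⟨hBne, -, hBk, hBmin⟩ := hB
  by_contra hAB'
  by_cases hAsB : A ⊆ B
  · have := hBmin A hAne (hAsB.ssubset_of_ne hAB)
    omega
  by_cases hBsA : B ⊆ A
  · have := hAmin B hBne (hBsA.ssubset_of_ne hAB.symm)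
    omega
  have := hAmin (A \ B) (sdiff_nonempty.2 hAsB) (sdiff_lt_left.2 fun h => hAB' h.symm)
  have := hBmin (B \ A) (sdiff_nonempty.2 hBsA) (sdiff_lt_left.2 hAB')
  have := G.card_cut_sdiff_add_card_cut_sdiff_le A B
  omega

theorem CriticalSet.eq_or_eq_compl {k : ℕ} {A B : Finset V} (hA : G.CriticalSet k A)
    (hAc : G.CriticalSet k Aᶜ) (hB : G.CriticalSet k B) : B = A ∨ B = Aᶜ := by
  by_contra! hBA
  have hBA' := disjoint_compl_right_iff.1 (hB.disjoint hAc hBA.2)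
  exact hB.1.ne_empty ((hB.disjoint hA hBA.1).eq_bot_of_le hBA')

theorem CriticalSet.cut_mem_kCuts [DecidableEq E] {k : ℕ} (hG : G.EdgeConnected k)
    {A : Finset V} (hA : G.CriticalSet k A) : G.cut A ∈ G.kCuts k :=
  mem_image_of_mem _ <| mem_filter.2
    ⟨mem_univ _, hA.1, hA.2.1, le_antisymm hA.2.2.1 (hG A hA.1 hA.2.1)⟩

theorem card_le_max_two_card_kCuts_of_criticalSet [DecidableEq E] {k : ℕ}
    (hG : G.EdgeConnected k) (hk : 0 < k)
    {𝓒 : Finset (Finset V)} (h𝓒 : ∀ A ∈ 𝓒, G.CriticalSet k A) :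
    #𝓒 ≤ max 2 #(G.kCuts k) := by
  by_cases hpair : ∃ A ∈ 𝓒, Aᶜ ∈ 𝓒
  · obtain ⟨A, hA, hAc⟩ := hpair
    have hsub : 𝓒 ⊆ {A, Aᶜ} := fun B hB => by
      simpa using (h𝓒 A hA).eq_or_eq_compl (h𝓒 _ hAc) (h𝓒 B hB)
    exact (card_le_card hsub).trans (card_le_two.trans (le_max_left _ _))
  push Not at hpair
  refine (card_le_card_of_injOn G.cut (fun A hA => (h𝓒 A hA).cut_mem_kCuts hG) ?_).trans
    (le_max_right _ _)
  intro A hA B hB hAB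
  exact (hG.eq_or_eq_compl_of_cut_eq hk hAB).resolve_right fun h => hpair B hB (h ▸ hA)

end Cuts

section AddVertex

variable {V E : Type} {n : ℕ} (G : Multigraph V E) (w : Fin n → V)

/-- `G` together with a new vertex `none`, joined to `w j` by the new edge `Sum.inr j`. -/
def addVertex : Multigraph (Option V) (E ⊕ Fin n) where
  fst := Sum.elim (some ∘ G.fst) fun _ => none
  snd := Sum.elim (some ∘ G.snd) (some ∘ w)
  no_loop := by rintro (e | j) <;> simp [G.no_loop]

variable [DecidableEq V] [Fintype E]

theorem degree_addVertex_none : (G.addVertex w).degree none = n := by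
  rw [degree, card_filter_univ_sum]
  simp [Incident, addVertex]

theorem card_cut_addVertex_map_some (A : Finset V) :
    #((G.addVertex w).cut (A.map .some)) = #(G.cut A) + #{j | w j ∈ A} := by
  simp [cut, card_filter_univ_sum, addVertex]

variable {G w}

theorem EdgeConnected.addVertex [Fintype V] {k : ℕ} (hG : G.EdgeConnected k) (hkn : k < n)
    (hw : ∀ B, G.CriticalSet k B → ∃ j, w j ∈ B) :
    (G.addVertex w).EdgeConnected (k + 1) := by
  have hsome : ∀ A : Finset V, A.Nonempty → k + 1 ≤ #((G.addVertex w).cut (A.map .some)) := by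
    intro A hA
    rw [card_cut_addVertex_map_some]
    by_cases hAu : A = univ
    · simpa [hAu, cut] using hkn
    rcases (hG A hA hAu).lt_or_eq with hlt | heq
    · omega
    obtain ⟨B, hBA, hB⟩ := G.exists_criticalSet_subset hA hAu heq.ge
    obtain ⟨j, hj⟩ := hw B hB
    have : 0 < #{j | w j ∈ A} := card_pos.2 ⟨j, by simpa using hBA hj⟩
    omega
  intro A hA hAu
  wlog hnone : none ∉ A generalizing A
  · rw [← cut_compl]
    refine this Aᶜ ((compl_ne_univ_iff_nonempty _).1 ?_) ((compl_ne_univ_iff_nonempty _).2 hA)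
      (by simpa using hnone)
    rwa [compl_compl]
  rw [← erase_eq_self.2 hnone, ← map_some_eraseNone]
  obtain ⟨a, ha⟩ := hA
  cases a with
  | none => exact absurd ha hnone
  | some v => exact hsome _ ⟨v, mem_eraseNone.2 ha⟩

variable (G w)

theorem outDeg_sub_inDeg_addVertex_some (D : E → Bool) (v : V) :
    (G.addVertex w).outDeg (Sum.elim D fun _ => true) (some v)
      - (G.addVertex w).inDeg (Sum.elim D fun _ => true) (some v)
      = G.outDeg D v - G.inDeg D v - #{j | w j = v} := by
  rw [outDeg, inDeg, card_filter_univ_sum, card_filter_univ_sum, outDeg, inDeg]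
  have ht : ∀ e, (G.addVertex w).tail (Sum.elim D fun _ => true) (.inl e) = some (G.tail D e) :=
    fun e => by cases h : D e <;> simp [tail, addVertex, h]
  have hh : ∀ e, (G.addVertex w).head (Sum.elim D fun _ => true) (.inl e) = some (G.head D e) :=
    fun e => by cases h : D e <;> simp [head, addVertex, h]
  simp only [ht, hh, Option.some_inj]
  simp [tail, head, addVertex, sub_add_eq_sub_sub]

theorem outDeg_sub_inDeg_addVertex_none :
    (G.addVertex w).outDeg (fun _ => true) none - (G.addVertex w).inDeg (fun _ => true) none
      = n := by
  rw [outDeg, inDeg, card_filter_univ_sum, card_filter_univ_sum]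
  simp [tail, head, addVertex]

variable {G w}

theorem Z3ExtendableAt.z3Connected_of_addVertex [Fintype V]
    (h : (G.addVertex w).Z3ExtendableAt none) : G.Z3Connected := by
  intro β hβ
  -- `β'` compensates for the flow that the new edges, oriented away from `none`, bring to `w j`
  let β' : Option V → ZMod 3 := fun o => o.elim n fun v => β v - #{j | w j = v}
  have hβ' : IsBoundary β' := by
    have hfibres : ∑ v, ((#{j | w j = v} : ℕ) : ZMod 3) = n := by
      rw [← Nat.cast_sum, sum_card_fiberwise_eq_card_filter]
      simp
    simp [IsBoundary, Fintype.sum_option, β', sum_sub_distrib, hfibres,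
      show ∑ v, β v = 0 from hβ]
  obtain ⟨D, hDnew, hD⟩ := h β' hβ' (fun _ => true)
    (by simp [outDeg_sub_inDeg_addVertex_none, β'])
  have hDeq : D = Sum.elim (D ∘ Sum.inl) fun _ => true := by
    funext e
    rcases e with e | j
    · rfl
    · exact hDnew (.inr j) (Or.inl rfl)
  refine ⟨D ∘ Sum.inl, fun v => ?_⟩
  have hv := hD (some v)
  rw [hDeq, outDeg_sub_inDeg_addVertex_some] at hv
  simp only [β', Option.elim_some, Int.cast_sub, Int.cast_natCast, sub_left_inj] at hv
  exact_mod_cast hv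

end AddVertex

/-- If every 5-edge-connected graph is `ℤ₃`-extendable at every vertex of
degree 5, then every 4-edge-connected graph with at most five edge-cuts of
size 4 is `ℤ₃`-connected. -/
theorem stmt_11
    (hyp : ∀ (V E : Type) [Fintype V] [DecidableEq V] [Fintype E] [DecidableEq E] (G : Multigraph V E) (x : V),
      G.EdgeConnected 5 → G.degree x = 5 → G.Z3ExtendableAt x)
    {V E : Type} [Fintype V] [DecidableEq V] [Fintype E] [DecidableEq E] (G : Multigraph V E)
    (h4 : G.EdgeConnected 4) (hc : (G.kCuts 4).card ≤ 5) :
    G.Z3Connected := by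
  classical
  obtain _ | _ := isEmpty_or_nonempty V
  · exact fun _ _ => ⟨fun _ => true, isEmptyElim⟩
  let 𝓒 : Finset (Finset V) := {A | G.CriticalSet 4 A}
  have h𝓒 : #𝓒 ≤ 5 := by
    refine (card_le_max_two_card_kCuts_of_criticalSet h4 (by norm_num) ?_).trans
      (max_le (by norm_num) hc)
    exact fun A hA => (mem_filter.1 hA).2
  obtain ⟨w, hw⟩ := exists_fin_forall_exists_apply_mem (fun A hA => (mem_filter.1 hA).2.1) h𝓒
  have hG' : (G.addVertex w).EdgeConnected 5 :=
    h4.addVertex (by norm_num) fun B hB => hw B (mem_filter.2 ⟨mem_univ B, hB⟩)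
  exact (hyp _ _ (G.addVertex w) none hG' (G.degree_addVertex_none w)).z3Connected_of_addVertex

end Multigraph
end
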